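/- The branch locus of the map f̃₄ : ℂ² → ℂ² given by f̃₄(s,t) = (s⁴ + (4ξ − 2)s²t² + t⁴, s⁵t − st⁵), with ξ = exp(2πi/6), is the cuspidal cubic curve of equation x³ + (−24ξ + 12)y² = 0; that is, eliminating s, t from the ideal generated by the Jacobian of f̃₄ and x − (s⁴ + (4ξ−2)s²t² + t⁴), y − (s⁵t − st⁵) yields the principal ideal (x³ + (−24ξ + 12)y²). -/

import Mathlib

/-! With `a = 4ξ - 2` one has `a² = -12`, and then, for `Q = s⁴ - a s²t² + t⁴`,
`J = 4 Q²` and `X³ + (-24ξ + 12) Y² = Q³`. So `f̃₄` maps `{J = 0} = {Q = 0}` into the cusp.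
Conversely, if `Q(γ, 1) = 0` then on the line `s = γ t` the map is `t ↦ (c t⁴, d t⁶)` with
`c³ + (-24ξ + 12) d² = 0`, `c ≠ 0`, which covers the whole cusp.

For the elimination ideal, `Q · J / 4` together with multiples of `x - X`, `y - Y` gives the cusp
equation. Conversely, an element of the elimination ideal vanishes on the branch locus, i.e. on
the cusp; dividing it by the cusp equation as a monic quadratic in `y` over `ℂ[x]` leaves
`r₀(x) + r₁(x) y`, and the symmetry `y ↦ -y` of the curve forces `r₀ = r₁ = 0`. -/

open MvPolynomial

/-- `ξ = exp(2πi/6)`. -/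
noncomputable def xi : ℂ := Complex.exp (2 * Real.pi * Complex.I / 6)

/-- First component `X(s,t) = s⁴ + (4ξ−2)s²t² + t⁴` in `ℂ[s,t,x,y]`
(variables `0,1,2,3` are `s,t,x,y`). -/
noncomputable def Xst : MvPolynomial (Fin 4) ℂ :=
  X 0 ^ 4 + C (4 * xi - 2) * X 0 ^ 2 * X 1 ^ 2 + X 1 ^ 4

/-- Second component `Y(s,t) = s⁵t − st⁵`. -/
noncomputable def Yst : MvPolynomial (Fin 4) ℂ := X 0 ^ 5 * X 1 - X 0 * X 1 ^ 5

/-- The Jacobian determinant of `(X(s,t), Y(s,t))` with respect to `s, t`. -/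
noncomputable def Jst : MvPolynomial (Fin 4) ℂ :=
  pderiv 0 Xst * pderiv 1 Yst - pderiv 1 Xst * pderiv 0 Yst

/-- The map `f̃₄(s,t) = (s⁴ + (4ξ−2)s²t² + t⁴, s⁵t − st⁵)`. -/
noncomputable def f4map (p : ℂ × ℂ) : ℂ × ℂ :=
  (p.1 ^ 4 + (4 * xi - 2) * p.1 ^ 2 * p.2 ^ 2 + p.2 ^ 4,
   p.1 ^ 5 * p.2 - p.1 * p.2 ^ 5)

theorem xi_sq_sub_xi_add_one : xi ^ 2 - xi + 1 = 0 := by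
  have h := (Complex.isPrimitiveRoot_exp 6 (by norm_num)).isRoot_cyclotomic (by norm_num)
  simpa [Polynomial.cyclotomic_six, xi] using h

theorem four_mul_xi_sub_two_sq : (4 * xi - 2) ^ 2 = -12 := by
  linear_combination (16 : ℂ) * xi_sq_sub_xi_add_one

theorem four_mul_xi_sub_two_ne_zero : 4 * xi - 2 ≠ 0 := fun h => by
  simpa [h] using four_mul_xi_sub_two_sq

section Identities

variable {R : Type*} [CommRing R] {a : R}

theorem jacobian_eq_four_mul_sq (ha : a ^ 2 = -12) (s t : R) :
    (4 * s ^ 3 + 2 * a * s * t ^ 2) * (s ^ 5 - 5 * s * t ^ 4) -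
        (2 * a * s ^ 2 * t + 4 * t ^ 3) * (5 * s ^ 4 * t - t ^ 5) =
      4 * (s ^ 4 - a * s ^ 2 * t ^ 2 + t ^ 4) ^ 2 := by
  linear_combination (-4 * s ^ 4 * t ^ 4) * ha

theorem cube_add_sq_eq_cube (ha : a ^ 2 = -12) (s t : R) :
    (s ^ 4 + a * s ^ 2 * t ^ 2 + t ^ 4) ^ 3 + -6 * a * (s ^ 5 * t - s * t ^ 5) ^ 2 =
      (s ^ 4 - a * s ^ 2 * t ^ 2 + t ^ 4) ^ 3 := by
  linear_combination (2 * a * s ^ 6 * t ^ 6) * ha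

end Identities

section Cusp

variable {K : Type*} [Field K]

theorem exists_eq_mul_sq_of_cube_add_sq {c d k x y : K} (hc : c ≠ 0)
    (hcd : c ^ 3 + k * d ^ 2 = 0) (hxy : x ^ 3 + k * y ^ 2 = 0) :
    ∃ σ, x = c * σ ^ 2 ∧ y = d * σ ^ 3 := by
  have hd : d ≠ 0 := by rintro rfl; simp_all
  have hk : k ≠ 0 := by rintro rfl; simp_all
  rcases eq_or_ne x 0 with rfl | hx
  · exact ⟨0, by simp, by simpa [hk] using hxy⟩
  · refine ⟨c * y / (d * x), ?_, ?_⟩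
    · field_simp
      linear_combination (-y ^ 2) * hcd + d ^ 2 * hxy
    · field_simp
      linear_combination (-y ^ 3) * hcd + d ^ 2 * y * hxy

theorem eq_zero_of_forall_eval_eq_zero_of_cube_add_sq [IsAlgClosed K] [NeZero (2 : K)] {k : K}
    (hk : k ≠ 0) {r : Polynomial (MvPolynomial (Fin 1) K)} (hr : r.degree ≤ 1)
    (hzero : ∀ x y : K, x ^ 3 + k * y ^ 2 = 0 → (r.map (eval fun _ => x)).eval y = 0) :
    r = 0 := by
  have hvanish (x : K) : eval (fun _ => x) (r.coeff 0) = 0 ∧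
      eval (fun _ => x) (r.coeff 1 * X 0) = 0 := by
    obtain ⟨y, hy⟩ := IsAlgClosed.exists_pow_nat_eq (-x ^ 3 / k) two_pos
    have hxy : x ^ 3 + k * y ^ 2 = 0 := by rw [hy]; field_simp; ring
    have hplus := hzero x y hxy
    have hminus := hzero x (-y) (by linear_combination hxy)
    rw [Polynomial.eq_X_add_C_of_degree_le_one hr] at hplus hminus
    simp only [Polynomial.map_add, Polynomial.map_mul, Polynomial.map_C, Polynomial.map_X,
      Polynomial.eval_add, Polynomial.eval_mul, Polynomial.eval_C, Polynomial.eval_X]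
      at hplus hminus
    set r₀ := eval (fun _ => x) (r.coeff 0)
    set r₁ := eval (fun _ => x) (r.coeff 1)
    have h₀ : 2 * r₀ = 0 := by linear_combination hplus + hminus
    have h₁ : 2 * (r₁ * y) = 0 := by linear_combination hplus - hminus
    replace h₁ := (mul_eq_zero.mp h₁).resolve_left two_ne_zero
    refine ⟨(mul_eq_zero.mp h₀).resolve_left two_ne_zero, ?_⟩
    rw [map_mul, eval_X, ← pow_eq_zero_iff three_ne_zero]
    linear_combination (-k * r₁ ^ 2 * y) * h₁ + r₁ ^ 3 * hxy
  have hcoeff_eq_zero (q : MvPolynomial (Fin 1) K) (hq : ∀ x : K, eval (fun _ => x) q = 0) :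
      q = 0 :=
    MvPolynomial.funext fun v => by
      rw [show v = fun _ => v 0 from funext fun i => congrArg v (Subsingleton.elim i 0), hq,
        map_zero]
  have h₀ := hcoeff_eq_zero _ fun x => (hvanish x).1
  have h₁ := mul_eq_zero.mp (hcoeff_eq_zero _ fun x => (hvanish x).2)
  rw [Polynomial.eq_X_add_C_of_degree_le_one hr, h₀, h₁.resolve_right (X_ne_zero 0)]
  simp

noncomputable def polyInY : MvPolynomial (Fin 2) K ≃ₐ[K] Polynomial (MvPolynomial (Fin 1) K) :=
  (renameEquiv K (Equiv.swap 0 1)).trans (finSuccEquiv K 1)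

theorem eval_eq_eval_map_polyInY (p : MvPolynomial (Fin 2) K) (x y : K) :
    eval ![x, y] p = ((polyInY p).map (eval fun _ => x)).eval y := by
  rw [polyInY, AlgEquiv.trans_apply, ← eval_eq_eval_mv_eval', renameEquiv_apply, eval_rename]
  congr 2
  funext i
  fin_cases i <;> rfl

theorem polyInY_C_inv_mul_cube_add_sq {k : K} (hk : k ≠ 0) :
    polyInY (C k⁻¹ * (X 0 ^ 3 + C k * X 1 ^ 2)) =
      Polynomial.X ^ 2 + Polynomial.C (C k⁻¹ * X 0 ^ 3) := by
  have hC (a : K) : polyInY (C a) = Polynomial.C (C a) := polyInY.commutes a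
  have hX₀ : polyInY (X 0 : MvPolynomial (Fin 2) K) = Polynomial.C (X 0) := by
    simpa [polyInY, rename_X] using finSuccEquiv_X_succ (j := (0 : Fin 1))
  have hX₁ : polyInY (X 1 : MvPolynomial (Fin 2) K) = Polynomial.X := by
    simp [polyInY, rename_X, finSuccEquiv_X_zero]
  rw [map_mul, map_add, map_mul, map_pow, map_pow, hC, hC, hX₀, hX₁, mul_add, ← mul_assoc,
    ← Polynomial.C_mul, ← map_mul, inv_mul_cancel₀ hk, map_one, Polynomial.C_1, one_mul,
    ← Polynomial.C_pow, ← Polynomial.C_mul, add_comm]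

theorem mem_span_cube_add_sq_of_forall_eval_eq_zero [IsAlgClosed K] [NeZero (2 : K)] {k : K}
    (hk : k ≠ 0) {p : MvPolynomial (Fin 2) K}
    (hp : ∀ x y : K, x ^ 3 + k * y ^ 2 = 0 → eval ![x, y] p = 0) :
    p ∈ Ideal.span {X 0 ^ 3 + C k * X 1 ^ 2} := by
  set g : MvPolynomial (Fin 2) K := C k⁻¹ * (X 0 ^ 3 + C k * X 1 ^ 2)
  have hg := polyInY_C_inv_mul_cube_add_sq hk
  have hmonic : (polyInY g).Monic := by
    rw [hg]; exact Polynomial.monic_X_pow_add_C _ two_ne_zero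
  have hrem : polyInY p %ₘ polyInY g = 0 := by
    refine eq_zero_of_forall_eval_eq_zero_of_cube_add_sq hk ?_ fun x y hxy => ?_
    · have hdeg : (polyInY g).degree = 2 := by
        rw [hg, Polynomial.degree_X_pow_add_C two_pos, Nat.cast_ofNat]
      have := Polynomial.degree_modByMonic_lt (polyInY p) hmonic
      rw [hdeg] at this
      exact Order.le_of_lt_succ this
    · have hg_eval : ((polyInY g).map (eval fun _ => x)).eval y = 0 := by
        rw [← eval_eq_eval_map_polyInY]
        simp [g, hxy]
      have := hp x y hxy
      rw [eval_eq_eval_map_polyInY,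
        ← Polynomial.modByMonic_add_div (polyInY p) (polyInY g)] at this
      simpa [hg_eval] using this
  have hdvd : p = g * polyInY.symm (polyInY p /ₘ polyInY g) := by
    apply polyInY.injective
    rw [map_mul, AlgEquiv.apply_symm_apply, ← zero_add (_ * _), ← hrem,
      Polynomial.modByMonic_add_div]
  rw [hdvd, mul_assoc]
  exact Ideal.mul_mem_left _ _ (Ideal.mul_mem_right _ _ (Ideal.subset_span rfl))

end Cusp

theorem image_f4map_eq_cusp :
    f4map '' {p : ℂ × ℂ |
        (4 * p.1 ^ 3 + 2 * (4 * xi - 2) * p.1 * p.2 ^ 2) * (p.1 ^ 5 - 5 * p.1 * p.2 ^ 4) -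
          (2 * (4 * xi - 2) * p.1 ^ 2 * p.2 + 4 * p.2 ^ 3) * (5 * p.1 ^ 4 * p.2 - p.2 ^ 5) = 0}
      = {q : ℂ × ℂ | q.1 ^ 3 + (-24 * xi + 12) * q.2 ^ 2 = 0} := by
  set a := 4 * xi - 2
  have ha : a ^ 2 = -12 := four_mul_xi_sub_two_sq
  have hk : (-24 * xi + 12 : ℂ) = -6 * a := by ring
  ext ⟨x, y⟩
  simp only [Set.mem_image, Set.mem_ofPred_eq, Prod.exists, f4map, Prod.mk.injEq, hk]
  constructor
  · rintro ⟨s, t, hJ, rfl, rfl⟩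
    rw [jacobian_eq_four_mul_sq ha, mul_eq_zero, pow_eq_zero_iff two_ne_zero] at hJ
    rw [cube_add_sq_eq_cube ha, hJ.resolve_left (by norm_num), zero_pow three_ne_zero]
  · intro hxy
    obtain ⟨γ, hγ⟩ : ∃ γ : ℂ, γ ^ 4 - a * γ ^ 2 + 1 = 0 := by
      have hdeg : (.X ^ 4 - .C a * .X ^ 2 + 1 : Polynomial ℂ).degree = 4 := by compute_degree!
      obtain ⟨γ, hγ⟩ := IsAlgClosed.exists_root _ (by rw [hdeg]; decide)
      exact ⟨γ, by simpa using hγ⟩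
    have hc : γ ^ 4 + a * γ ^ 2 + 1 ≠ 0 := by
      have hγ0 : γ ≠ 0 := by rintro rfl; norm_num at hγ
      rw [show γ ^ 4 + a * γ ^ 2 + 1 = 2 * a * γ ^ 2 by linear_combination hγ]
      exact mul_ne_zero (mul_ne_zero two_ne_zero four_mul_xi_sub_two_ne_zero) (pow_ne_zero 2 hγ0)
    have hcd : (γ ^ 4 + a * γ ^ 2 + 1) ^ 3 + -6 * a * (γ ^ 5 - γ) ^ 2 = 0 := by
      simpa [hγ] using cube_add_sq_eq_cube ha γ 1
    obtain ⟨σ, rfl, rfl⟩ := exists_eq_mul_sq_of_cube_add_sq hc hcd hxy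
    obtain ⟨τ, rfl⟩ := IsAlgClosed.exists_pow_nat_eq σ two_pos
    refine ⟨γ * τ, τ, ?_, by ring, by ring⟩
    rw [jacobian_eq_four_mul_sq ha]
    linear_combination (4 * τ ^ 8 * (γ ^ 4 - a * γ ^ 2 + 1)) * hγ

theorem Jst_eq :
    Jst = (4 * X 0 ^ 3 + 2 * C (4 * xi - 2) * X 0 * X 1 ^ 2) * (X 0 ^ 5 - 5 * X 0 * X 1 ^ 4) -
      (2 * C (4 * xi - 2) * X 0 ^ 2 * X 1 + 4 * X 1 ^ 3) * (5 * X 0 ^ 4 * X 1 - X 1 ^ 5) := by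
  simp only [Jst, Xst, Yst, C_mul, map_add, map_sub, Derivation.leibniz_pow,
    Derivation.leibniz, derivation_C, pderiv_X, Pi.single_eq_same, Pi.single_eq_of_ne,
    one_ne_zero, zero_ne_one, ne_eq, not_false_eq_true, smul_eq_mul, nsmul_eq_mul]
  ring

theorem comap_rename_le_span_cusp :
    Ideal.comap (MvPolynomial.rename (![2, 3] : Fin 2 → Fin 4)).toRingHom
        (Ideal.span {Jst, X 2 - Xst, X 3 - Yst})
      ≤ Ideal.span {(X 0 : MvPolynomial (Fin 2) ℂ) ^ 3 + C (-24 * xi + 12) * X 1 ^ 2} := by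
  intro p hp
  rw [Ideal.mem_comap] at hp
  refine mem_span_cube_add_sq_of_forall_eval_eq_zero ?_ fun x y hxy => ?_
  · rw [show (-24 * xi + 12 : ℂ) = -6 * (4 * xi - 2) by ring]
    exact mul_ne_zero (by norm_num) four_mul_xi_sub_two_ne_zero
  have hmem : (x, y) ∈ {q : ℂ × ℂ | q.1 ^ 3 + (-24 * xi + 12) * q.2 ^ 2 = 0} := hxy
  rw [← image_f4map_eq_cusp] at hmem
  obtain ⟨⟨s, t⟩, hJ, hst⟩ := hmem
  simp only [f4map, Prod.mk.injEq] at hst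
  have hker : Ideal.span {Jst, X 2 - Xst, X 3 - Yst} ≤ RingHom.ker (eval ![s, t, x, y]) := by
    rw [Ideal.span_le]
    rintro _ (rfl | rfl | rfl)
    · simpa [Jst_eq] using hJ
    · simp [Xst, ← hst.1]
    · simp [Yst, ← hst.2]
  have hcomp : ![s, t, x, y] ∘ ![2, 3] = ![x, y] := by
    ext i; fin_cases i <;> rfl
  have := hker hp
  rwa [RingHom.mem_ker, AlgHom.toRingHom_eq_coe, RingHom.coe_coe, eval_rename, hcomp] at this

theorem cube_add_sq_mem_span_jacobian :
    (X 2 ^ 3 + C (-24 * xi + 12) * X 3 ^ 2 : MvPolynomial (Fin 4) ℂ) ∈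
      Ideal.span {Jst, X 2 - Xst, X 3 - Yst} := by
  have ha : C (4 * xi - 2) ^ 2 = (-12 : MvPolynomial (Fin 4) ℂ) := by
    rw [← map_pow, four_mul_xi_sub_two_sq, map_neg, map_ofNat]
  have hk : C (-24 * xi + 12) = (-6 : MvPolynomial (Fin 4) ℂ) * C (4 * xi - 2) := by
    rw [← map_ofNat C 6, ← map_neg, ← map_mul]; ring_nf
  have h4 : C 4⁻¹ * 4 = (1 : MvPolynomial (Fin 4) ℂ) := by
    rw [← map_ofNat C 4, ← map_mul, inv_mul_cancel₀ (by norm_num), map_one]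
  have hJ := jacobian_eq_four_mul_sq ha (X 0) (X 1)
  have hcusp := cube_add_sq_eq_cube ha (X 0) (X 1)
  rw [← Jst_eq] at hJ
  rw [← Xst, ← Yst, ← hk] at hcusp
  set Q := (X 0 ^ 4 - C (4 * xi - 2) * X 0 ^ 2 * X 1 ^ 2 + X 1 ^ 4 : MvPolynomial (Fin 4) ℂ)
  have hcomb : (X 2 ^ 3 + C (-24 * xi + 12) * X 3 ^ 2 : MvPolynomial (Fin 4) ℂ) =
      C 4⁻¹ * Q * Jst + (X 2 ^ 2 + X 2 * Xst + Xst ^ 2) * (X 2 - Xst) +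
        C (-24 * xi + 12) * (X 3 + Yst) * (X 3 - Yst) := by
    linear_combination hcusp - (C 4⁻¹ * Q) * hJ - Q ^ 3 * h4
  rw [hcomb]
  refine Ideal.add_mem _ (Ideal.add_mem _ ?_ ?_) ?_ <;> apply Ideal.mul_mem_left <;>
    apply Ideal.subset_span <;> simp

theorem comap_rename_span_eq_span_cusp :
    Ideal.comap (MvPolynomial.rename (![2, 3] : Fin 2 → Fin 4)).toRingHom
        (Ideal.span {Jst, X 2 - Xst, X 3 - Yst})
      = Ideal.span {(X 0 : MvPolynomial (Fin 2) ℂ) ^ 3 + C (-24 * xi + 12) * X 1 ^ 2} := by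
  refine le_antisymm comap_rename_le_span_cusp ?_
  rw [Ideal.span_le, Set.singleton_subset_iff, SetLike.mem_coe, Ideal.mem_comap,
    AlgHom.toRingHom_eq_coe, RingHom.coe_coe, map_add, map_mul, map_pow, map_pow, rename_X,
    rename_X, rename_C]
  exact cube_add_sq_mem_span_jacobian

/-- The branch locus of `f̃₄` is the cuspidal cubic `x³ + (−24ξ + 12)y² = 0`:
the image of the zero set of the Jacobian is this curve, and eliminating `s, t`
from the ideal `(J, x − X(s,t), y − Y(s,t))` yields the principal ideal
`(x³ + (−24ξ + 12)y²)`. -/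
theorem stmt_19 :
    (f4map '' {p : ℂ × ℂ |
        (4 * p.1 ^ 3 + 2 * (4 * xi - 2) * p.1 * p.2 ^ 2) *
            (p.1 ^ 5 - 5 * p.1 * p.2 ^ 4) -
          (2 * (4 * xi - 2) * p.1 ^ 2 * p.2 + 4 * p.2 ^ 3) *
            (5 * p.1 ^ 4 * p.2 - p.2 ^ 5) = 0}
      = {q : ℂ × ℂ | q.1 ^ 3 + (-24 * xi + 12) * q.2 ^ 2 = 0}) ∧
    Ideal.comap (MvPolynomial.rename (![2, 3] : Fin 2 → Fin 4)).toRingHom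
        (Ideal.span {Jst, X 2 - Xst, X 3 - Yst})
      = Ideal.span {(X 0 : MvPolynomial (Fin 2) ℂ) ^ 3 + C (-24 * xi + 12) * X 1 ^ 2} :=
  ⟨image_f4map_eq_cusp, comap_rename_span_eq_span_cusp⟩
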